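/- arXiv:2508.07074 — 5 statements merged into one kernel-verified Lean document; each statement's English description precedes it below -/
import Mathlib

section
/- Let A_i ∈ ℝ^{q×p} and B_i ∈ ℝ^{d×p} for i = 1,…,n with ∑_{i=1}^n A_i A_iᵀ ≻ 0. Equality holds in the matrix Cauchy–Schwarz inequality, i.e. ∑ B_i B_iᵀ = (∑ B_i A_iᵀ)(∑ A_i A_iᵀ)^{-1}(∑ A_i B_iᵀ), if and only if B_i = (∑_{j=1}^n B_j A_jᵀ)(∑_{j=1}^n A_j A_jᵀ)^{-1} A_i for every i. -/
open Matrix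

lemma sum_mul_transpose_self_eq_zero {n d p : ℕ} (M : Fin n → Matrix (Fin d) (Fin p) ℝ)
    (h : ∑ i, M i * (M i)ᵀ = 0) : ∀ i, M i = 0 := by
  intro i
  ext j k
  have hjj := congrFun (congrFun h j) j
  simp only [Matrix.sum_apply, Matrix.mul_apply, Matrix.transpose_apply, Matrix.zero_apply] at hjj
  have hnn : ∀ i ∈ Finset.univ, (0:ℝ) ≤ ∑ k, M i j k * M i j k := by
    intro i _
    exact Finset.sum_nonneg fun k _ => mul_self_nonneg _
  have h1 := (Finset.sum_eq_zero_iff_of_nonneg hnn).mp hjj i (Finset.mem_univ i)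
  have h2 := (Finset.sum_eq_zero_iff_of_nonneg
    (fun k _ => mul_self_nonneg (M i j k))).mp h1 k (Finset.mem_univ k)
  have := mul_self_eq_zero.mp h2
  simpa using this

/-- Equality case of the matrix Cauchy–Schwarz inequality. -/
theorem matrix_cauchy_schwarz_eq_iff (n q p d : ℕ)
    (A : Fin n → Matrix (Fin q) (Fin p) ℝ) (B : Fin n → Matrix (Fin d) (Fin p) ℝ)
    (hA : (∑ i, A i * (A i)ᵀ).PosDef) :
    (∑ i, B i * (B i)ᵀ) =
      (∑ i, B i * (A i)ᵀ) * (∑ i, A i * (A i)ᵀ)⁻¹ * (∑ i, A i * (B i)ᵀ) ↔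
    ∀ i, B i = (∑ j, B j * (A j)ᵀ) * (∑ j, A j * (A j)ᵀ)⁻¹ * A i := by
  set S : Matrix (Fin q) (Fin q) ℝ := ∑ i, A i * (A i)ᵀ with hSdef
  set R : Matrix (Fin d) (Fin q) ℝ := ∑ i, B i * (A i)ᵀ with hRdef
  set T : Matrix (Fin q) (Fin d) ℝ := ∑ i, A i * (B i)ᵀ with hTdef
  have hdet : IsUnit S.det := isUnit_iff_ne_zero.mpr hA.det_pos.ne'
  have hS1 : S * S⁻¹ = 1 := Matrix.mul_nonsing_inv S hdet
  have hS2 : S⁻¹ * S = 1 := Matrix.nonsing_inv_mul S hdet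
  have hSt : Sᵀ = S := by
    simp [hSdef, Matrix.transpose_sum, Matrix.transpose_mul]
  have hSit : (S⁻¹)ᵀ = S⁻¹ := by
    rw [Matrix.transpose_nonsing_inv, hSt]
  have hRt : Rᵀ = T := by
    simp [hRdef, hTdef, Matrix.transpose_sum, Matrix.transpose_mul]
  set C : Matrix (Fin d) (Fin q) ℝ := R * S⁻¹ with hCdef
  have hCt : Cᵀ = S⁻¹ * T := by
    rw [hCdef, Matrix.transpose_mul, hSit, hRt]
  have key : ∑ i, (B i - C * A i) * (B i - C * A i)ᵀ
      = (∑ i, B i * (B i)ᵀ) - R * (S⁻¹ * T) - C * T + C * (S * (S⁻¹ * T)) := by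
    have expand : ∀ i, (B i - C * A i) * (B i - C * A i)ᵀ
        = B i * (B i)ᵀ - (B i * (A i)ᵀ) * Cᵀ - C * (A i * (B i)ᵀ)
          + C * ((A i * (A i)ᵀ) * Cᵀ) := by
      intro i
      rw [Matrix.transpose_sub, Matrix.transpose_mul, Matrix.sub_mul,
        Matrix.mul_sub, Matrix.mul_sub]
      simp only [Matrix.mul_assoc]
      abel
    simp_rw [expand]
    rw [Finset.sum_add_distrib, Finset.sum_sub_distrib, Finset.sum_sub_distrib,
      ← Matrix.sum_mul, ← Matrix.mul_sum, ← Matrix.mul_sum, ← Matrix.sum_mul,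
      ← hRdef, ← hTdef, ← hSdef, hCt]
  have e1 : S * (S⁻¹ * T) = T := by rw [← Matrix.mul_assoc, hS1, Matrix.one_mul]
  have e2 : R * (S⁻¹ * T) = C * T := by rw [hCdef, Matrix.mul_assoc]
  constructor
  · intro h
    have h' : ∑ i, B i * (B i)ᵀ = C * T := by rw [hCdef]; exact h
    have hzero : ∑ i, (B i - C * A i) * (B i - C * A i)ᵀ = 0 := by
      rw [key, e1, e2, h']
      abel
    intro i
    have hz := sum_mul_transpose_self_eq_zero _ hzero i
    have : B i = C * A i := by
      have := sub_eq_zero.mp hz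
      exact this
    rw [this, hCdef]
  · intro h
    have hB : ∀ i, B i = C * A i := fun i => by rw [hCdef]; exact h i
    have hT : T = S * Cᵀ := by
      rw [hTdef, hSdef, Matrix.sum_mul]
      apply Finset.sum_congr rfl
      intro i _
      rw [hB i, Matrix.transpose_mul, ← Matrix.mul_assoc]
    have lhs_eq : ∑ i, B i * (B i)ᵀ = R * Cᵀ := by
      rw [hRdef, Matrix.sum_mul]
      apply Finset.sum_congr rfl
      intro i _
      rw [hB i, Matrix.transpose_mul, ← Matrix.mul_assoc]
    have rhs_eq : R * S⁻¹ * T = R * Cᵀ := by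
      rw [hT, Matrix.mul_assoc R, ← Matrix.mul_assoc S⁻¹, hS2, Matrix.one_mul]
    rw [lhs_eq, rhs_eq]
end

section
/- Let V_i ⪰ 0 be d×d positive semidefinite matrices and α_i, β_i ≥ 0 scalars for i = 1,…,n, with ∑_{i=1}^n α_i V_i positive definite. Then ∑_{i=1}^n β_i V_i ⪰ (∑_{i=1}^n √(α_i β_i) V_i)(∑_{i=1}^n α_i V_i)^{-1}(∑_{i=1}^n √(α_i β_i) V_i). -/
open Matrix

lemma aux_block_psd {d : ℕ} (V : Matrix (Fin d) (Fin d) ℝ) (hV : V.PosSemidef)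
    (a b : ℝ) (ha : 0 ≤ a) (hb : 0 ≤ b) :
    (fromBlocks (a • V) (Real.sqrt (a * b) • V) (Real.sqrt (a * b) • V) (b • V)).PosSemidef := by
  obtain ⟨L, hL⟩ : ∃ L : Matrix (Fin d) (Fin d) ℝ, V = Lᴴ * L := by
    open scoped MatrixOrder in
    obtain ⟨X, hX, -, hXV⟩ :=
      CFC.exists_sqrt_of_isSelfAdjoint_of_quasispectrumRestricts hV.isHermitian
        (QuasispectrumRestricts.nnreal_of_nonneg hV.nonneg)
    exact ⟨X, hXV ▸ congrArg (· * X) hX.star_eq.symm⟩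
  have key : fromBlocks (a • V) (Real.sqrt (a * b) • V) (Real.sqrt (a * b) • V) (b • V)
      = (fromBlocks (Real.sqrt a • L) (Real.sqrt b • L) 0 0)ᴴ *
        (fromBlocks (Real.sqrt a • L) (Real.sqrt b • L) 0 0) := by
    rw [fromBlocks_conjTranspose, fromBlocks_multiply]
    simp only [conjTranspose_smul, conjTranspose_zero, Matrix.smul_mul, Matrix.mul_smul,
      Matrix.zero_mul, Matrix.mul_zero, add_zero, smul_smul, star_trivial]
    rw [← hL, Real.mul_self_sqrt ha, Real.mul_self_sqrt hb, mul_comm (Real.sqrt b) (Real.sqrt a),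
      ← Real.sqrt_mul ha]
  rw [key]
  exact posSemidef_conjTranspose_mul_self _

/-- Corollary of the matrix Cauchy–Schwarz inequality for weighted sums of PSD matrices. -/
theorem weighted_matrix_cauchy_schwarz (n d : ℕ)
    (V : Fin n → Matrix (Fin d) (Fin d) ℝ) (hV : ∀ i, (V i).PosSemidef)
    (α β : Fin n → ℝ) (hα : ∀ i, 0 ≤ α i) (hβ : ∀ i, 0 ≤ β i)
    (hpd : (∑ i, α i • V i).PosDef) :
    ((∑ i, β i • V i) -
      (∑ i, Real.sqrt (α i * β i) • V i) * (∑ i, α i • V i)⁻¹ *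
        (∑ i, Real.sqrt (α i * β i) • V i)).PosSemidef := by
  set A := ∑ i, α i • V i with hA
  set B := ∑ i, Real.sqrt (α i * β i) • V i with hB
  set C := ∑ i, β i • V i with hC
  haveI : Invertible A := hpd.isUnit.invertible
  have hBH : Bᴴ = B := by
    simp only [hB, conjTranspose_sum, conjTranspose_smul]
    refine Finset.sum_congr rfl fun i _ => ?_
    rw [(hV i).1]
    simp
  have hblock : (fromBlocks A B Bᴴ C).PosSemidef := by
    rw [hBH]
    have : fromBlocks A B B C = ∑ i, fromBlocks (α i • V i) (Real.sqrt (α i * β i) • V i)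
        (Real.sqrt (α i * β i) • V i) (β i • V i) := by
      ext x y
      cases x <;> cases y <;>
        simp [hA, hB, hC, Matrix.sum_apply, fromBlocks_apply₁₁, fromBlocks_apply₁₂,
          fromBlocks_apply₂₁, fromBlocks_apply₂₂]
    rw [this]
    apply Finset.sum_induction _ Matrix.PosSemidef (fun _ _ => Matrix.PosSemidef.add)
      Matrix.PosSemidef.zero
    intro i _
    exact aux_block_psd (V i) (hV i) (α i) (β i) (hα i) (hβ i)
  have h := (Matrix.PosDef.fromBlocks₁₁ B C hpd).mp hblock
  rwa [hBH] at h
end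

section
/- Let A_1,…,A_n be d×d positive semidefinite matrices with ∑_i A_i ≻ 0, let φ : S^d_{++} → ℝ and define ψ(M) := −φ(M^{-1}). Assume ψ is differentiable, isotonic, and concave on S^d_{++}. Let f(w) := φ(∑_i w_i A_i) on the set of probability vectors w with ∑_i w_i A_i ≻ 0. Suppose w^k is such a vector with ∂f/∂w_i(w^k) > 0 for every i in the support of w^k. For λ ∈ (0,1], define w^{k+1}_i := w^k_i (∂f/∂w_i(w^k))^λ / ∑_j w^k_j (∂f/∂w_j(w^k))^λ. Then ∑_i w^{k+1}_i A_i ≻ 0 and f(w^{k+1}) ≥ f(w^k). -/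
open Matrix

namespace MAM

variable {d : ℕ}

lemma quad_nonneg {A : Matrix (Fin d) (Fin d) ℝ} (hA : A.PosSemidef) (x : Fin d → ℝ) :
    0 ≤ x ⬝ᵥ (A *ᵥ x) := by simpa using hA.dotProduct_mulVec_nonneg x

lemma quad_pos {A : Matrix (Fin d) (Fin d) ℝ} (hA : A.PosDef) {x : Fin d → ℝ} (hx : x ≠ 0) :
    0 < x ⬝ᵥ (A *ᵥ x) := by simpa using hA.dotProduct_mulVec_pos hx

lemma cs_psd {A : Matrix (Fin d) (Fin d) ℝ} (hA : A.PosSemidef) (x y : Fin d → ℝ) :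
    (x ⬝ᵥ (A *ᵥ y)) ^ 2 ≤ (x ⬝ᵥ (A *ᵥ x)) * (y ⬝ᵥ (A *ᵥ y)) := by
  obtain ⟨B, rfl⟩ : ∃ B : Matrix (Fin d) (Fin d) ℝ, A = Bᴴ * B := by
    open scoped MatrixOrder Matrix.Norms.L2Operator in
    exact CStarAlgebra.nonneg_iff_eq_star_mul_self.mp hA.nonneg
  have h : ∀ u v : Fin d → ℝ, u ⬝ᵥ ((Bᴴ * B) *ᵥ v) = (B *ᵥ u) ⬝ᵥ (B *ᵥ v) := by
    intro u v
    rw [← Matrix.mulVec_mulVec, Matrix.conjTranspose_eq_transpose_of_trivial,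
      Matrix.dotProduct_mulVec u, Matrix.vecMul_transpose]
  rw [h, h, h]
  have := Finset.sum_mul_sq_le_sq_mul_sq Finset.univ (B *ᵥ x) (B *ᵥ y)
  simp only [dotProduct]
  calc (∑ i, (B *ᵥ x) i * (B *ᵥ y) i) ^ 2
      ≤ (∑ i, ((B *ᵥ x) i) ^ 2) * (∑ i, ((B *ᵥ y) i) ^ 2) := this
    _ = (∑ i, (B *ᵥ x) i * (B *ᵥ x) i) * (∑ i, (B *ᵥ y) i * (B *ᵥ y) i) := by
        simp [sq]

lemma abs_quad_le (K : Matrix (Fin d) (Fin d) ℝ) (x : Fin d → ℝ) :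
    |x ⬝ᵥ (K *ᵥ x)| ≤ (∑ i, ∑ j, |K i j|) * (x ⬝ᵥ x) := by
  have hx2 : ∀ i : Fin d, x i ^ 2 ≤ x ⬝ᵥ x := by
    intro i
    simp only [dotProduct]
    calc x i ^ 2 = x i * x i := sq (x i)
      _ ≤ ∑ j, x j * x j := Finset.single_le_sum (f := fun j => x j * x j)
          (fun j _ => mul_self_nonneg _) (Finset.mem_univ i)
  have key : ∀ i j : Fin d, |x i * (K i j * x j)| ≤ |K i j| * (x ⬝ᵥ x) := by
    intro i j
    have h1 := hx2 i
    have h2 := hx2 j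
    have : |x i * (K i j * x j)| = |K i j| * (|x i| * |x j|) := by
      rw [abs_mul, abs_mul]; ring
    rw [this]
    have hxx : |x i| * |x j| ≤ x ⬝ᵥ x := by
      nlinarith [sq_nonneg (|x i| - |x j|), sq_abs (x i), sq_abs (x j),
        abs_nonneg (x i), abs_nonneg (x j)]
    exact mul_le_mul_of_nonneg_left hxx (abs_nonneg _)
  calc |x ⬝ᵥ (K *ᵥ x)| = |∑ i, ∑ j, x i * (K i j * x j)| := by
        simp [dotProduct, Matrix.mulVec, Finset.mul_sum]
    _ ≤ ∑ i, |∑ j, x i * (K i j * x j)| := Finset.abs_sum_le_sum_abs _ _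
    _ ≤ ∑ i, ∑ j, |x i * (K i j * x j)| :=
        Finset.sum_le_sum fun i _ => Finset.abs_sum_le_sum_abs _ _
    _ ≤ ∑ i, ∑ j, |K i j| * (x ⬝ᵥ x) :=
        Finset.sum_le_sum fun i _ => Finset.sum_le_sum fun j _ => key i j
    _ = (∑ i, ∑ j, |K i j|) * (x ⬝ᵥ x) := by
        rw [Finset.sum_mul]
        exact Finset.sum_congr rfl fun i _ => (Finset.sum_mul _ _ _).symm

end MAM

namespace MAM

variable {d n : ℕ}

lemma herm_isSymm {M : Matrix (Fin d) (Fin d) ℝ} (h : M.IsHermitian) : M.IsSymm := by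
  rw [Matrix.IsSymm, ← Matrix.conjTranspose_eq_transpose_of_trivial]
  exact h

lemma quad_sum (c : Fin n → ℝ) (A : Fin n → Matrix (Fin d) (Fin d) ℝ) (x y : Fin d → ℝ) :
    x ⬝ᵥ ((∑ i, c i • A i) *ᵥ y) = ∑ i, c i * (x ⬝ᵥ (A i *ᵥ y)) := by
  classical
  induction (Finset.univ : Finset (Fin n)) using Finset.induction_on with
  | empty => simp
  | insert _ _ hnotmem ih =>
    rw [Finset.sum_insert hnotmem, Finset.sum_insert hnotmem, Matrix.add_mulVec,
      dotProduct_add, ih, Matrix.smul_mulVec, dotProduct_smul,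
      smul_eq_mul]

lemma herm_sum (c : Fin n → ℝ) (A : Fin n → Matrix (Fin d) (Fin d) ℝ)
    (hA : ∀ i, (A i).PosSemidef) : (∑ i, c i • A i).IsHermitian := by
  rw [Matrix.IsHermitian, Matrix.conjTranspose_sum]
  refine Finset.sum_congr rfl fun i _ => ?_
  rw [Matrix.conjTranspose_smul, star_trivial, (hA i).isHermitian]

lemma pd_sum (c w : Fin n → ℝ) (A : Fin n → Matrix (Fin d) (Fin d) ℝ)
    (hA : ∀ i, (A i).PosSemidef) (hc0 : ∀ i, 0 ≤ c i) (hw0 : ∀ i, 0 ≤ w i)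
    (hdom : ∀ i, 0 < w i → 0 < c i) (hMw : (∑ i, w i • A i).PosDef) :
    (∑ i, c i • A i).PosDef := by
  refine Matrix.PosDef.of_dotProduct_mulVec_pos (herm_sum c A hA) fun x hx => ?_
  have hq := hMw.dotProduct_mulVec_pos hx
  simp only [star_trivial] at hq ⊢
  rw [quad_sum] at hq ⊢
  have hex : ∃ i : Fin n, 0 < w i * (x ⬝ᵥ (A i *ᵥ x)) := by
    by_contra hcon
    push_neg at hcon
    have : ∑ i, w i * (x ⬝ᵥ (A i *ᵥ x)) ≤ 0 :=
      Finset.sum_nonpos fun i _ => hcon i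
    linarith
  obtain ⟨i0, hi0⟩ := hex
  have hwi : 0 < w i0 := by
    rcases lt_or_eq_of_le (hw0 i0) with h | h
    · exact h
    · exfalso; rw [← h] at hi0; simpa using hi0
  have hqi : 0 < x ⬝ᵥ (A i0 *ᵥ x) := by
    by_contra hcon
    push_neg at hcon
    nlinarith
  refine Finset.sum_pos' (fun i _ => mul_nonneg (hc0 i) (quad_nonneg (hA i) x)) ?_
  exact ⟨i0, Finset.mem_univ i0, mul_pos (hdom i0 hwi) hqi⟩

lemma pd_lower {M : Matrix (Fin d) (Fin d) ℝ} (hM : M.PosDef) :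
    ∃ m : ℝ, 0 < m ∧ ∀ x : Fin d → ℝ, m * (x ⬝ᵥ x) ≤ x ⬝ᵥ (M *ᵥ x) := by
  have hB : (0:ℝ) ≤ ∑ i, ∑ j, |M⁻¹ i j| :=
    Finset.sum_nonneg fun i _ => Finset.sum_nonneg fun j _ => abs_nonneg _
  have hcpos : (0:ℝ) < (∑ i, ∑ j, |M⁻¹ i j|) + 1 := by linarith
  refine ⟨((∑ i, ∑ j, |M⁻¹ i j|) + 1)⁻¹, inv_pos.mpr hcpos, fun x => ?_⟩
  rcases eq_or_ne x 0 with rfl | hx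
  · simp
  have hdet : IsUnit M.det := isUnit_iff_ne_zero.mpr hM.det_pos.ne'
  have h1 : x ⬝ᵥ (M *ᵥ (M⁻¹ *ᵥ x)) = x ⬝ᵥ x := by
    rw [Matrix.mulVec_mulVec, Matrix.mul_nonsing_inv _ hdet, Matrix.one_mulVec]
  have hcs := cs_psd hM.posSemidef x (M⁻¹ *ᵥ x)
  rw [h1] at hcs
  have h2 : (M⁻¹ *ᵥ x) ⬝ᵥ (M *ᵥ (M⁻¹ *ᵥ x)) = x ⬝ᵥ (M⁻¹ *ᵥ x) := by
    rw [Matrix.mulVec_mulVec, Matrix.mul_nonsing_inv _ hdet, Matrix.one_mulVec,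
      dotProduct_comm]
  rw [h2] at hcs
  have hxx : (0:ℝ) ≤ x ⬝ᵥ x := Finset.sum_nonneg fun i _ => mul_self_nonneg _
  have h3 : x ⬝ᵥ (M⁻¹ *ᵥ x) ≤ ((∑ i, ∑ j, |M⁻¹ i j|) + 1) * (x ⬝ᵥ x) := by
    have habs := abs_quad_le M⁻¹ x
    have hle := le_abs_self (x ⬝ᵥ (M⁻¹ *ᵥ x))
    nlinarith
  have hxxpos : 0 < x ⬝ᵥ x := by
    rcases lt_or_eq_of_le hxx with h | h
    · exact h
    · exact absurd ((dotProduct_self_eq_zero).mp h.symm) hx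
  have hs : 0 ≤ x ⬝ᵥ (M *ᵥ x) := quad_nonneg hM.posSemidef x
  rw [inv_mul_le_iff₀ hcpos]
  nlinarith

end MAM

namespace MAM

variable {d n : ℕ}

lemma eventually_posDef {M D : Matrix (Fin d) (Fin d) ℝ} (hM : M.PosDef)
    (hD : D.IsHermitian) : ∀ᶠ t in nhds (0:ℝ), (M + t • D).PosDef := by
  obtain ⟨m, hm, hlow⟩ := pd_lower hM
  have hDb : (0:ℝ) ≤ ∑ i, ∑ j, |D i j| :=
    Finset.sum_nonneg fun i _ => Finset.sum_nonneg fun j _ => abs_nonneg _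
  set cD : ℝ := (∑ i, ∑ j, |D i j|) + 1 with hcD
  have hcDpos : 0 < cD := by rw [hcD]; linarith
  have hkey : ∀ t : ℝ, |t| < m / cD → (M + t • D).PosDef := by
    intro t ht
    have hsm : (t • D).IsHermitian := by
      have : (t • D)ᴴ = t • D := by
        rw [Matrix.conjTranspose_smul, star_trivial]
        exact congrArg (t • ·) hD
      exact this
    refine Matrix.PosDef.of_dotProduct_mulVec_pos (hM.isHermitian.add hsm) fun x hx => ?_
    simp only [star_trivial]
    rw [Matrix.add_mulVec, dotProduct_add, Matrix.smul_mulVec,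
      dotProduct_smul, smul_eq_mul]
    have h1 := hlow x
    have h2 := abs_quad_le D x
    have hxxpos : 0 < x ⬝ᵥ x := by
      rcases lt_or_eq_of_le (Finset.sum_nonneg fun i _ => mul_self_nonneg (x i) :
        (0:ℝ) ≤ x ⬝ᵥ x) with h | h
      · exact h
      · exact absurd ((dotProduct_self_eq_zero).mp h.symm) hx
    have h3 : |t * (x ⬝ᵥ (D *ᵥ x))| ≤ |t| * (cD * (x ⬝ᵥ x)) := by
      rw [abs_mul]
      refine mul_le_mul_of_nonneg_left ?_ (abs_nonneg t)
      have : ((∑ i, ∑ j, |D i j|)) * (x ⬝ᵥ x) ≤ cD * (x ⬝ᵥ x) := by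
        apply mul_le_mul_of_nonneg_right _ hxxpos.le
        rw [hcD]; linarith
      linarith
    have h4 : |t| * (cD * (x ⬝ᵥ x)) < (m / cD) * (cD * (x ⬝ᵥ x)) := by
      have := mul_pos hcDpos hxxpos
      exact (mul_lt_mul_of_pos_right ht (by positivity))
    have h5 : (m / cD) * (cD * (x ⬝ᵥ x)) = m * (x ⬝ᵥ x) := by
      field_simp
    have h6 := neg_abs_le (t * (x ⬝ᵥ (D *ᵥ x)))
    have h7 := h3.trans_lt h4
    rw [h5] at h7
    linarith
  have : Set.Ioo (-(m / cD)) (m / cD) ∈ nhds (0:ℝ) := by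
    apply Ioo_mem_nhds <;> [linarith [div_pos hm hcDpos]; exact div_pos hm hcDpos]
  filter_upwards [this] with t ht
  exact hkey t (abs_lt.mpr ⟨ht.1, ht.2⟩)

lemma cont_inv_line (M D : Matrix (Fin d) (Fin d) ℝ) (h : M.det ≠ 0) :
    ContinuousAt (fun t : ℝ => (M + t • D)⁻¹) 0 := by
  have hline : Continuous fun t : ℝ => M + t • D :=
    continuous_const.add (continuous_id.smul continuous_const)
  have h2 : ContinuousAt Inv.inv (M + (0:ℝ) • D) := by
    apply continuousAt_matrix_inv
    rw [Ring.inverse_eq_inv']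
    apply continuousAt_inv₀
    simpa using h
  show ContinuousAt (Inv.inv ∘ fun t : ℝ => M + t • D) 0
  exact ContinuousAt.comp (f := fun t : ℝ => M + t • D) h2 hline.continuousAt

lemma key_quad {A : Matrix (Fin d) (Fin d) ℝ} (hA : A.PosSemidef) (u v : Fin d → ℝ)
    (a b c : ℝ) (ha : 0 ≤ a) (hb : 0 ≤ b) (hc : 0 ≤ c) (h : b ^ 2 ≤ a * c) :
    0 ≤ a * (u ⬝ᵥ (A *ᵥ u)) + 2 * b * (u ⬝ᵥ (A *ᵥ v)) + c * (v ⬝ᵥ (A *ᵥ v)) := by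
  have qu := quad_nonneg hA u
  have qv := quad_nonneg hA v
  have hcs := cs_psd hA u v
  have h1 : (b * (u ⬝ᵥ (A *ᵥ v))) ^ 2 ≤ (a * (u ⬝ᵥ (A *ᵥ u))) * (c * (v ⬝ᵥ (A *ᵥ v))) := by
    have := mul_le_mul h hcs (sq_nonneg _) (mul_nonneg ha hc)
    calc (b * (u ⬝ᵥ (A *ᵥ v))) ^ 2 = b ^ 2 * (u ⬝ᵥ (A *ᵥ v)) ^ 2 := by ring
      _ ≤ a * c * ((u ⬝ᵥ (A *ᵥ u)) * (v ⬝ᵥ (A *ᵥ v))) := this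
      _ = (a * (u ⬝ᵥ (A *ᵥ u))) * (c * (v ⬝ᵥ (A *ᵥ v))) := by ring
  nlinarith [sq_nonneg (a * (u ⬝ᵥ (A *ᵥ u)) - c * (v ⬝ᵥ (A *ᵥ v))),
    sq_nonneg (a * (u ⬝ᵥ (A *ᵥ u)) + c * (v ⬝ᵥ (A *ᵥ v)) + 2 * b * (u ⬝ᵥ (A *ᵥ v))),
    mul_nonneg ha qu, mul_nonneg hc qv]

end MAM

namespace MAM

variable {d n : ℕ}

lemma symm_dot {M : Matrix (Fin d) (Fin d) ℝ} (h : M.IsHermitian) (x y : Fin d → ℝ) :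
    x ⬝ᵥ (M *ᵥ y) = (M *ᵥ x) ⬝ᵥ y := by
  have hs : Mᵀ = M := herm_isSymm h
  rw [Matrix.dotProduct_mulVec, ← Matrix.mulVec_transpose, hs]

lemma schur_psd (A : Fin n → Matrix (Fin d) (Fin d) ℝ) (hA : ∀ i, (A i).PosSemidef)
    (a b c : Fin n → ℝ) (ha : ∀ i, 0 ≤ a i) (hb : ∀ i, 0 ≤ b i) (hc : ∀ i, 0 ≤ c i)
    (hsq : ∀ i, (b i) ^ 2 ≤ a i * c i)
    (hN : (∑ i, a i • A i).PosDef) :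
    ((∑ i, c i • A i) - (∑ i, b i • A i) * (∑ i, a i • A i)⁻¹ * (∑ i, b i • A i)).PosSemidef := by
  have hNdet : IsUnit (∑ i, a i • A i).det := isUnit_iff_ne_zero.mpr hN.det_pos.ne'
  have hermC := herm_sum c A hA
  have hermM := herm_sum b A hA
  refine Matrix.PosSemidef.of_dotProduct_mulVec_nonneg ?_ ?_
  · have h := Matrix.isHermitian_conjTranspose_mul_mul (∑ i, b i • A i) hN.inv.isHermitian
    rw [hermM] at h
    exact hermC.sub h
  · intro x
    simp only [star_trivial]
    obtain ⟨z, hz⟩ : ∃ z, z = (∑ i, b i • A i) *ᵥ x := ⟨_, rfl⟩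
    obtain ⟨u, hu⟩ : ∃ u, u = (∑ i, a i • A i)⁻¹ *ᵥ z := ⟨_, rfl⟩
    have hterm : ∀ i : Fin n, 0 ≤ a i * ((-u) ⬝ᵥ (A i *ᵥ (-u)))
        + 2 * b i * ((-u) ⬝ᵥ (A i *ᵥ x)) + c i * (x ⬝ᵥ (A i *ᵥ x)) := fun i =>
      key_quad (hA i) (-u) x (a i) (b i) (c i) (ha i) (hb i) (hc i) (hsq i)
    have hsum : 0 ≤ ∑ i, (a i * ((-u) ⬝ᵥ (A i *ᵥ (-u)))
        + 2 * b i * ((-u) ⬝ᵥ (A i *ᵥ x)) + c i * (x ⬝ᵥ (A i *ᵥ x))) :=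
      Finset.sum_nonneg fun i _ => hterm i
    rw [Finset.sum_add_distrib, Finset.sum_add_distrib] at hsum
    have e1 : ∑ i, a i * ((-u) ⬝ᵥ (A i *ᵥ (-u))) = (-u) ⬝ᵥ ((∑ i, a i • A i) *ᵥ (-u)) :=
      (quad_sum a A (-u) (-u)).symm
    have e2 : ∑ i, 2 * b i * ((-u) ⬝ᵥ (A i *ᵥ x)) = 2 * ((-u) ⬝ᵥ ((∑ i, b i • A i) *ᵥ x)) := by
      rw [quad_sum b A (-u) x, Finset.mul_sum]
      exact Finset.sum_congr rfl fun i _ => by ring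
    have e3 : ∑ i, c i * (x ⬝ᵥ (A i *ᵥ x)) = x ⬝ᵥ ((∑ i, c i • A i) *ᵥ x) :=
      (quad_sum c A x x).symm
    rw [e1, e2, e3] at hsum
    have hNu : (∑ i, a i • A i) *ᵥ u = z := by
      rw [hu, Matrix.mulVec_mulVec, Matrix.mul_nonsing_inv _ hNdet, Matrix.one_mulVec]
    have s1 : (-u) ⬝ᵥ ((∑ i, a i • A i) *ᵥ (-u)) = u ⬝ᵥ z := by
      rw [Matrix.mulVec_neg, dotProduct_neg, neg_dotProduct, neg_neg, hNu]
    have s2 : (-u) ⬝ᵥ ((∑ i, b i • A i) *ᵥ x) = -(u ⬝ᵥ z) := by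
      rw [neg_dotProduct, hz]
    rw [s1, s2] at hsum
    have hMNM : ((∑ i, b i • A i) * (∑ i, a i • A i)⁻¹ * (∑ i, b i • A i)) *ᵥ x
        = (∑ i, b i • A i) *ᵥ u := by
      rw [← Matrix.mulVec_mulVec, ← Matrix.mulVec_mulVec, ← hz, ← hu]
    have target : x ⬝ᵥ (((∑ i, c i • A i) - (∑ i, b i • A i) * (∑ i, a i • A i)⁻¹ *
        (∑ i, b i • A i)) *ᵥ x) = x ⬝ᵥ ((∑ i, c i • A i) *ᵥ x) - u ⬝ᵥ z := by
      rw [Matrix.sub_mulVec, dotProduct_sub, hMNM, symm_dot hermM x u, ← hz,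
        dotProduct_comm z u]
    rw [target]
    linarith

lemma holder_mu (w z : Fin n → ℝ) (hw0 : ∀ i, 0 ≤ w i) (hw1 : ∑ i, w i = 1)
    (hz : ∀ i, 0 ≤ z i) {μ : ℝ} (h0 : 0 ≤ μ) (h1 : μ ≤ 1) :
    ∑ i, w i * z i ^ μ ≤ (∑ i, w i * z i) ^ μ := by
  rcases eq_or_lt_of_le h0 with rfl | hμ
  · simp [Real.rpow_zero, hw1]
  have hp : (1:ℝ) ≤ 1 / μ := by
    rw [le_div_iff₀ hμ]; linarith
  have key := Real.rpow_arith_mean_le_arith_mean_rpow Finset.univ w (fun i => z i ^ μ)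
    (fun i _ => hw0 i) hw1 (fun i _ => Real.rpow_nonneg (hz i) μ) hp
  have hsimp : ∀ i : Fin n, (z i ^ μ) ^ (1/μ : ℝ) = z i := by
    intro i
    rw [← Real.rpow_mul (hz i), mul_one_div_cancel hμ.ne', Real.rpow_one]
  have key2 : (∑ i, w i * z i ^ μ) ^ (1/μ:ℝ) ≤ ∑ i, w i * z i := by
    refine le_trans key (le_of_eq ?_)
    refine Finset.sum_congr rfl fun i _ => ?_
    show w i * (z i ^ μ) ^ (1/μ:ℝ) = w i * z i
    rw [hsimp i]
  have hXnn : (0:ℝ) ≤ ∑ i, w i * z i ^ μ :=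
    Finset.sum_nonneg fun i _ => mul_nonneg (hw0 i) (Real.rpow_nonneg (hz i) μ)
  have := Real.rpow_le_rpow (Real.rpow_nonneg hXnn (1/μ)) key2 hμ.le
  rwa [← Real.rpow_mul hXnn, one_div_mul_cancel hμ.ne', Real.rpow_one] at this

end MAM

namespace MAM

variable {d : ℕ}

lemma grad_transfer (φ ψ : Matrix (Fin d) (Fin d) ℝ → ℝ)
    (gφ gψ : Matrix (Fin d) (Fin d) ℝ → Matrix (Fin d) (Fin d) ℝ)
    (hψφ : ∀ M : Matrix (Fin d) (Fin d) ℝ, ψ M = -φ M⁻¹)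
    (hgφ : ∀ M H : Matrix (Fin d) (Fin d) ℝ, M.PosDef → H.IsSymm →
      HasDerivAt (fun t : ℝ => φ (M + t • H)) ((gφ M * H).trace) 0)
    (hconc : ∀ X Y : Matrix (Fin d) (Fin d) ℝ, X.PosDef → Y.PosDef →
      ψ Y ≤ ψ X + (gψ X * (Y - X)).trace)
    {M D : Matrix (Fin d) (Fin d) ℝ} (hM : M.PosDef) (hDherm : D.IsHermitian) :
    (gφ M * D).trace = (gψ M⁻¹ * (M⁻¹ * D * M⁻¹)).trace := by
  have hD : D.IsSymm := herm_isSymm hDherm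
  have hdet : M.det ≠ 0 := hM.det_pos.ne'
  have hMunit : IsUnit M.det := isUnit_iff_ne_zero.mpr hdet
  have hEpd : ∀ᶠ t in nhds (0:ℝ), (M + t • D).PosDef := eventually_posDef hM hDherm
  obtain ⟨v, hvdef⟩ : ∃ v : ℝ → ℝ,
      v = fun t => -((gψ M⁻¹ * ((M + t • D)⁻¹ - M⁻¹)).trace) := ⟨_, rfl⟩
  have hv0 : v 0 = 0 := by simp [hvdef]
  have hinv_id : ∀ t : ℝ, IsUnit (M + t • D).det →
      (M + t • D)⁻¹ - M⁻¹ = (-t) • ((M + t • D)⁻¹ * D * M⁻¹) := by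
    intro t hu
    have h1 : (M + t • D)⁻¹ * ((M - (M + t • D)) * M⁻¹) = (M + t • D)⁻¹ - M⁻¹ := by
      rw [Matrix.sub_mul, Matrix.mul_sub, Matrix.mul_nonsing_inv _ hMunit, mul_one,
        ← Matrix.mul_assoc, Matrix.nonsing_inv_mul _ hu, Matrix.one_mul]
    rw [← h1, sub_add_cancel_left]
    rw [Matrix.neg_mul, Matrix.mul_neg, Matrix.smul_mul, Matrix.mul_smul, neg_smul,
      Matrix.mul_assoc]
  have hvd : HasDerivAt v ((gψ M⁻¹ * (M⁻¹ * D * M⁻¹)).trace) 0 := by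
    rw [hasDerivAt_iff_tendsto_slope]
    have h1 := cont_inv_line M D hdet
    have h2 : Continuous fun Z : Matrix (Fin d) (Fin d) ℝ =>
        (gψ M⁻¹ * (Z * D * M⁻¹)).trace :=
      (continuous_const.matrix_mul
        (((continuous_id.matrix_mul continuous_const).matrix_mul
          continuous_const))).matrix_trace
    have hcont : ContinuousAt
        (fun t : ℝ => (gψ M⁻¹ * ((M + t • D)⁻¹ * D * M⁻¹)).trace) 0 := by
      show ContinuousAt ((fun Z : Matrix (Fin d) (Fin d) ℝ => (gψ M⁻¹ * (Z * D * M⁻¹)).trace)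
        ∘ fun t : ℝ => (M + t • D)⁻¹) 0
      exact ContinuousAt.comp (f := fun t : ℝ => (M + t • D)⁻¹) h2.continuousAt h1
    have hval : (gψ M⁻¹ * ((M + (0:ℝ) • D)⁻¹ * D * M⁻¹)).trace
        = (gψ M⁻¹ * (M⁻¹ * D * M⁻¹)).trace := by norm_num
    have T : Filter.Tendsto (fun t : ℝ => (gψ M⁻¹ * ((M + t • D)⁻¹ * D * M⁻¹)).trace)
        (nhds 0) (nhds ((gψ M⁻¹ * (M⁻¹ * D * M⁻¹)).trace)) := by
      have := hcont.tendsto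
      rwa [hval] at this
    refine Filter.Tendsto.congr' ?_ (T.mono_left nhdsWithin_le_nhds)
    filter_upwards [hEpd.filter_mono nhdsWithin_le_nhds, self_mem_nhdsWithin] with t hpd hne
    have htne : t ≠ 0 := hne
    have hu : IsUnit (M + t • D).det := isUnit_iff_ne_zero.mpr hpd.det_pos.ne'
    rw [slope_def_field, hv0, sub_zero, sub_zero, hvdef]
    show (gψ M⁻¹ * ((M + t • D)⁻¹ * D * M⁻¹)).trace
      = -((gψ M⁻¹ * ((M + t • D)⁻¹ - M⁻¹)).trace) / t
    rw [hinv_id t hu, Matrix.mul_smul, Matrix.trace_smul, smul_eq_mul]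
    field_simp
  have hud : HasDerivAt (fun t : ℝ => φ (M + t • D)) ((gφ M * D).trace) 0 := hgφ M D hM hD
  have hmin : IsLocalMin (fun t => φ (M + t • D) - v t) 0 := by
    filter_upwards [hEpd] with t hpd
    have huinv : IsUnit (M + t • D).det := isUnit_iff_ne_zero.mpr hpd.det_pos.ne'
    have h1 : φ (M + t • D) = -ψ ((M + t • D)⁻¹) := by
      rw [hψφ ((M + t • D)⁻¹), Matrix.nonsing_inv_nonsing_inv _ huinv, neg_neg]
    have h0 : φ (M + (0:ℝ) • D) = -ψ M⁻¹ := by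
      rw [show M + (0:ℝ) • D = M by simp, hψφ M⁻¹, Matrix.nonsing_inv_nonsing_inv _ hMunit,
        neg_neg]
    have h3 := hconc M⁻¹ (M + t • D)⁻¹ hM.inv hpd.inv
    show φ (M + (0:ℝ) • D) - v 0 ≤ φ (M + t • D) - v t
    have hvt : v t = -((gψ M⁻¹ * ((M + t • D)⁻¹ - M⁻¹)).trace) := by rw [hvdef]
    rw [hv0, h1, h0, hvt]
    linarith
  have hz := hmin.hasDerivAt_eq_zero (hud.sub hvd)
  have : (gφ M * D).trace - (gψ M⁻¹ * (M⁻¹ * D * M⁻¹)).trace = 0 := hz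
  linarith

end MAM


open MAM in
/-- Monotonicity of the multiplicative algorithm.  Gradients are encoded by matrices
`gφ M`, `gψ M` whose trace pairing with a symmetric direction gives the directional
derivative; the partial derivative of `f(w) = φ(∑ wᵢ Aᵢ)` in `wᵢ` is
`⟨∇φ(M(w)), Aᵢ⟩ = tr(gφ (M w) * A i)`. -/
theorem multiplicative_algorithm_monotone (d n : ℕ)
    (A : Fin n → Matrix (Fin d) (Fin d) ℝ) (hA : ∀ i, (A i).PosSemidef)
    (hAsum : (∑ i, A i).PosDef)
    (φ ψ : Matrix (Fin d) (Fin d) ℝ → ℝ)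
    (hψφ : ∀ M : Matrix (Fin d) (Fin d) ℝ, ψ M = -φ M⁻¹)
    (gφ gψ : Matrix (Fin d) (Fin d) ℝ → Matrix (Fin d) (Fin d) ℝ)
    (hgψ : ∀ M H : Matrix (Fin d) (Fin d) ℝ, M.PosDef → H.IsSymm →
      HasDerivAt (fun t : ℝ => ψ (M + t • H)) ((gψ M * H).trace) 0)
    (hgφ : ∀ M H : Matrix (Fin d) (Fin d) ℝ, M.PosDef → H.IsSymm →
      HasDerivAt (fun t : ℝ => φ (M + t • H)) ((gφ M * H).trace) 0)
    (hiso : ∀ X Y : Matrix (Fin d) (Fin d) ℝ, X.PosDef → (Y - X).PosSemidef → ψ X ≤ ψ Y)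
    (hconc : ∀ X Y : Matrix (Fin d) (Fin d) ℝ, X.PosDef → Y.PosDef →
      ψ Y ≤ ψ X + (gψ X * (Y - X)).trace)
    (w : Fin n → ℝ) (hw0 : ∀ i, 0 ≤ w i) (hw1 : ∑ i, w i = 1)
    (hMw : (∑ i, w i • A i).PosDef)
    (g : Fin n → ℝ) (hg : ∀ i, g i = (gφ (∑ j, w j • A j) * A i).trace)
    (hpos : ∀ i, 0 < w i → 0 < g i)
    (lam : ℝ) (hlam0 : 0 < lam) (hlam1 : lam ≤ 1)
    (w' : Fin n → ℝ)
    (hw' : ∀ i, w' i = w i * (g i) ^ lam / ∑ j, w j * (g j) ^ lam) :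
    (∑ i, w' i • A i).PosDef ∧ φ (∑ i, w i • A i) ≤ φ (∑ i, w' i • A i) := by
  classical
  obtain ⟨i0, hi0⟩ : ∃ i, 0 < w i := by
    by_contra hcon
    push_neg at hcon
    have : ∑ i, w i ≤ 0 := Finset.sum_nonpos fun i _ => hcon i
    rw [hw1] at this; linarith
  obtain ⟨G, hGdef⟩ : ∃ G : Fin n → ℝ, G = fun i => if 0 < w i then g i else 0 := ⟨_, rfl⟩
  have hGi : ∀ i, 0 < w i → G i = g i := by
    intro i h; rw [hGdef]; exact if_pos h
  have hG0 : ∀ i, 0 ≤ G i := by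
    intro i; rw [hGdef]; dsimp only
    split
    · exact (hpos i ‹_›).le
    · exact le_refl 0
  have hwzero : ∀ i, ¬ 0 < w i → w i = 0 := fun i h => le_antisymm (not_lt.mp h) (hw0 i)
  have hterm_lam : ∀ i, w i * g i ^ lam = w i * G i ^ lam := by
    intro i
    by_cases h : 0 < w i
    · rw [hGi i h]
    · rw [hwzero i h, zero_mul, zero_mul]
  set S := ∑ j, w j * g j ^ lam with hS
  have hSG : S = ∑ j, w j * G j ^ lam := by
    rw [hS]; exact Finset.sum_congr rfl fun i _ => hterm_lam i
  have hSpos : 0 < S := by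
    rw [hSG]
    refine Finset.sum_pos' (fun i _ => mul_nonneg (hw0 i) (Real.rpow_nonneg (hG0 i) lam)) ?_
    refine ⟨i0, Finset.mem_univ i0, mul_pos hi0 (Real.rpow_pos_of_pos ?_ lam)⟩
    rw [hGi i0 hi0]; exact hpos i0 hi0
  have hw'0 : ∀ i, 0 ≤ w' i := by
    intro i
    rw [hw' i, hterm_lam i]
    exact div_nonneg (mul_nonneg (hw0 i) (Real.rpow_nonneg (hG0 i) lam)) hSpos.le
  have hw'supp : ∀ i, 0 < w i → 0 < w' i := by
    intro i h
    rw [hw' i]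
    exact div_pos (mul_pos h (Real.rpow_pos_of_pos (hpos i h) lam)) hSpos
  obtain ⟨cc, hccdef⟩ : ∃ cc : Fin n → ℝ, cc = fun i => w i * S * G i ^ (-lam) := ⟨_, rfl⟩
  have hcc : ∀ i, cc i = w i * S * G i ^ (-lam) := fun i => by rw [hccdef]
  have hcc0 : ∀ i, 0 ≤ cc i := fun i => by
    rw [hcc i]
    exact mul_nonneg (mul_nonneg (hw0 i) hSpos.le) (Real.rpow_nonneg (hG0 i) _)
  have hsq : ∀ i, (w i) ^ 2 ≤ w' i * cc i := by
    intro i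
    by_cases h : 0 < w i
    · have hgpos := hpos i h
      have hone : g i ^ lam * g i ^ (-lam) = 1 := by
        rw [← Real.rpow_add hgpos, add_neg_cancel, Real.rpow_zero]
      rw [hw' i, hcc i, hGi i h]
      apply le_of_eq
      field_simp
      linear_combination (-1 : ℝ) * hone
    · rw [hwzero i h, hcc i, hwzero i h]
      simp
  have hN : (∑ i, w' i • A i).PosDef := pd_sum w' w A hA hw'0 hw0 hw'supp hMw
  refine ⟨hN, ?_⟩
  have hMdet : IsUnit (∑ i, w i • A i).det := isUnit_iff_ne_zero.mpr hMw.det_pos.ne'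
  have hNdet : IsUnit (∑ i, w' i • A i).det := isUnit_iff_ne_zero.mpr hN.det_pos.ne'
  have schur := schur_psd A hA w' w cc hw'0 hw0 hcc0 hsq hN
  have hMinvherm : (∑ i, w i • A i)⁻¹.IsHermitian := hMw.inv.isHermitian
  have key1 : ((∑ i, w i • A i)⁻¹ * (∑ i, cc i • A i) * (∑ i, w i • A i)⁻¹
      - (∑ i, w' i • A i)⁻¹).PosSemidef := by
    have h := schur.mul_mul_conjTranspose_same (∑ i, w i • A i)⁻¹
    rw [hMinvherm] at h
    have e : (∑ i, w i • A i)⁻¹ * ((∑ i, cc i • A i)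
        - (∑ i, w i • A i) * (∑ i, w' i • A i)⁻¹ * (∑ i, w i • A i)) * (∑ i, w i • A i)⁻¹
        = (∑ i, w i • A i)⁻¹ * (∑ i, cc i • A i) * (∑ i, w i • A i)⁻¹
          - (∑ i, w' i • A i)⁻¹ := by
      rw [Matrix.mul_sub, Matrix.sub_mul]
      congr 1
      rw [← Matrix.mul_assoc, ← Matrix.mul_assoc, Matrix.nonsing_inv_mul _ hMdet, one_mul,
        Matrix.mul_assoc, Matrix.mul_nonsing_inv _ hMdet, mul_one]
    rwa [e] at h
  have key2 : ((∑ i, w i • A i)⁻¹ * (∑ i, cc i • A i) * (∑ i, w i • A i)⁻¹).PosDef := by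
    have h := Matrix.PosDef.posSemidef_add key1 hN.inv
    rwa [sub_add_cancel] at h
  have step1 : ψ ((∑ i, w' i • A i)⁻¹)
      ≤ ψ ((∑ i, w i • A i)⁻¹ * (∑ i, cc i • A i) * (∑ i, w i • A i)⁻¹) :=
    hiso _ _ hN.inv key1
  have step2 := hconc _ _ hMw.inv key2
  have hPM : (∑ i, w i • A i)⁻¹ * (∑ i, cc i • A i) * (∑ i, w i • A i)⁻¹
      - (∑ i, w i • A i)⁻¹
      = (∑ i, w i • A i)⁻¹ * ((∑ i, cc i • A i) - (∑ i, w i • A i)) * (∑ i, w i • A i)⁻¹ := by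
    rw [Matrix.mul_sub, Matrix.sub_mul, Matrix.nonsing_inv_mul _ hMdet, one_mul]
  have hsymmCM : ((∑ i, cc i • A i) - (∑ i, w i • A i)).IsHermitian :=
    (herm_sum cc A hA).sub (herm_sum w A hA)
  have grad := grad_transfer φ ψ gφ gψ hψφ hgφ hconc hMw hsymmCM
  have htr : ∀ v : Fin n → ℝ,
      (gφ (∑ i, w i • A i) * (∑ i, v i • A i)).trace = ∑ i, v i * g i := by
    intro v
    rw [Matrix.mul_sum, Matrix.trace_sum]
    refine Finset.sum_congr rfl fun i _ => ?_
    rw [Matrix.mul_smul, Matrix.trace_smul, smul_eq_mul, ← hg i]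
  have hgtr : (gφ (∑ i, w i • A i) * ((∑ i, cc i • A i) - (∑ i, w i • A i))).trace
      = (∑ i, cc i * g i) - (∑ i, w i * g i) := by
    rw [Matrix.mul_sub, Matrix.trace_sub, htr cc, htr w]
  -- Chebyshev / Hölder step
  have h1 : ∀ i, cc i * g i = S * (w i * G i ^ (1 - lam)) := by
    intro i
    by_cases h : 0 < w i
    · have hgpos := hpos i h
      rw [hcc i, hGi i h]
      have hsplit : g i ^ (-lam) * g i = g i ^ (1 - lam) := by
        have hh := Real.rpow_add hgpos (-lam) 1
        rw [Real.rpow_one] at hh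
        rw [← hh, show -lam + 1 = 1 - lam by ring]
      linear_combination (w i * S) * hsplit
    · rw [hwzero i h, hcc i, hwzero i h]
      simp
  have h2 : ∑ i, cc i * g i = S * ∑ i, w i * G i ^ (1 - lam) := by
    rw [Finset.mul_sum]
    exact Finset.sum_congr rfl fun i _ => h1 i
  have h3 : ∑ i, w i * g i = ∑ i, w i * G i := by
    refine Finset.sum_congr rfl fun i _ => ?_
    by_cases h : 0 < w i
    · rw [hGi i h]
    · rw [hwzero i h, zero_mul, zero_mul]
  have hT : 0 < ∑ i, w i * G i := by
    refine Finset.sum_pos' (fun i _ => mul_nonneg (hw0 i) (hG0 i)) ?_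
    refine ⟨i0, Finset.mem_univ i0, mul_pos hi0 ?_⟩
    rw [hGi i0 hi0]; exact hpos i0 hi0
  have hH1 : S ≤ (∑ i, w i * G i) ^ lam := by
    rw [hSG]
    exact holder_mu w G hw0 hw1 hG0 hlam0.le hlam1
  have hH2 : ∑ i, w i * G i ^ (1 - lam) ≤ (∑ i, w i * G i) ^ (1 - lam) :=
    holder_mu w G hw0 hw1 hG0 (by linarith) (by linarith)
  have hprod : (∑ i, w i * G i) ^ lam * (∑ i, w i * G i) ^ (1 - lam) = ∑ i, w i * G i := by
    rw [← Real.rpow_add hT, show lam + (1 - lam) = 1 by ring, Real.rpow_one]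
  have hsum2nn : 0 ≤ ∑ i, w i * G i ^ (1 - lam) :=
    Finset.sum_nonneg fun i _ => mul_nonneg (hw0 i) (Real.rpow_nonneg (hG0 i) _)
  have cheb : ∑ i, cc i * g i ≤ ∑ i, w i * g i := by
    rw [h2, h3, ← hprod]
    exact mul_le_mul hH1 hH2 hsum2nn (Real.rpow_nonneg (le_of_lt hT) _)
  -- final chain
  have hψN : ψ ((∑ i, w' i • A i)⁻¹) = -φ (∑ i, w' i • A i) := by
    rw [hψφ, Matrix.nonsing_inv_nonsing_inv _ hNdet]
  have hψM : ψ ((∑ i, w i • A i)⁻¹) = -φ (∑ i, w i • A i) := by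
    rw [hψφ, Matrix.nonsing_inv_nonsing_inv _ hMdet]
  rw [hPM] at step2
  rw [← grad, hgtr] at step2
  rw [hψN] at step1
  rw [hψM] at step2
  linarith
end

section
/- Suppose g : (0,∞) → ℝ is injective, strictly concave, and matrix monotone (A ⪰ B ≻ 0 implies g(A) ⪰ g(B), where g is applied spectrally). Then ψ(X) := tr(g(X)) is strictly concave and strictly isotonic on the cone of d×d symmetric positive definite matrices. -/
open Matrix Set

section Aux

variable {d : ℕ}

/-- Trace of the functional calculus is the sum of `f` of the eigenvalues. -/
private lemma aux_trace_cfc (A : Matrix (Fin d) (Fin d) ℝ) (hA : A.IsHermitian) (f : ℝ → ℝ) :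
    (cfc f A).trace = ∑ i, f (hA.eigenvalues i) := by
  rw [hA.cfc_eq, Matrix.IsHermitian.cfc, Unitary.conjStarAlgAut_apply, Matrix.trace_mul_cycle]
  rw [show (star (hA.eigenvectorUnitary : Matrix (Fin d) (Fin d) ℝ)) *
      (hA.eigenvectorUnitary : Matrix (Fin d) (Fin d) ℝ) = 1 from
    Unitary.coe_star_mul_self hA.eigenvectorUnitary, one_mul]
  simp [Matrix.trace_diagonal, RCLike.ofReal_real_eq_id]

private lemma aux_trace_eq_sum_eigenvalues (A : Matrix (Fin d) (Fin d) ℝ)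
    (hA : A.IsHermitian) : A.trace = ∑ i, hA.eigenvalues i := by
  have hA' : IsSelfAdjoint A := hA
  have := aux_trace_cfc A hA id
  rwa [cfc_id ℝ A hA'] at this

private lemma aux_psd_trace_zero (M : Matrix (Fin d) (Fin d) ℝ) (hM : M.PosSemidef)
    (h : M.trace = 0) : M = 0 := by
  have hev : ∀ i, hM.1.eigenvalues i = 0 := by
    rw [aux_trace_eq_sum_eigenvalues M hM.1] at h
    intro i
    exact (Finset.sum_eq_zero_iff_of_nonneg (fun j _ => hM.eigenvalues_nonneg j)).mp h i
      (Finset.mem_univ i)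
  have := hM.1.spectral_theorem
  rw [show (RCLike.ofReal ∘ hM.1.eigenvalues : Fin d → ℝ) = fun _ => (0:ℝ) by
    funext i; simp [hev i]] at this
  simpa [Matrix.diagonal_zero] using this

private lemma aux_conj_posdef {A U : Matrix (Fin d) (Fin d) ℝ}
    (hU : U ∈ Matrix.unitaryGroup (Fin d) ℝ) (hA : A.PosDef) :
    (star U * A * U).PosDef := by
  have hUU : star U * U = 1 := Matrix.mem_unitaryGroup_iff'.mp hU
  refine Matrix.posDef_iff_dotProduct_mulVec.mpr ⟨?_, ?_⟩
  · rw [Matrix.star_eq_conjTranspose]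
    exact Matrix.isHermitian_conjTranspose_mul_mul U hA.1
  · intro x hx
    have hUx : U *ᵥ x ≠ 0 := by
      intro h
      apply hx
      have := congrArg (fun v => (star U) *ᵥ v) h
      simpa [Matrix.mulVec_mulVec, hUU] using this
    have := hA.dotProduct_mulVec_pos hUx
    rwa [show star x ⬝ᵥ (star U * A * U) *ᵥ x
        = star (U *ᵥ x) ⬝ᵥ A *ᵥ (U *ᵥ x) from ?_]
    calc star x ⬝ᵥ (star U * A * U) *ᵥ x
        = star x ⬝ᵥ star U *ᵥ (A *ᵥ (U *ᵥ x)) := by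
          rw [Matrix.mulVec_mulVec, Matrix.mulVec_mulVec]
      _ = (star x ᵥ* star U) ⬝ᵥ (A *ᵥ (U *ᵥ x)) := Matrix.dotProduct_mulVec _ _ _
      _ = star (U *ᵥ x) ⬝ᵥ A *ᵥ (U *ᵥ x) := by
          rw [star_mulVec, Matrix.star_eq_conjTranspose]

private lemma aux_diag_pos {A : Matrix (Fin d) (Fin d) ℝ} (hA : A.PosDef) (i : Fin d) :
    0 < A i i := by
  exact hA.diag_pos

private lemma aux_smul_posdef {A : Matrix (Fin d) (Fin d) ℝ} {c : ℝ} (hc : 0 < c)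
    (hA : A.PosDef) : (c • A).PosDef := by
  refine Matrix.posDef_iff_dotProduct_mulVec.mpr ⟨?_, ?_⟩
  · unfold Matrix.IsHermitian
    rw [Matrix.conjTranspose_smul, hA.1]
    simp
  · intro x hx
    have := hA.dotProduct_mulVec_pos hx
    simp only [Matrix.smul_mulVec, dotProduct_smul, smul_eq_mul]
    exact mul_pos hc this

private lemma aux_smul_psd {A : Matrix (Fin d) (Fin d) ℝ} {c : ℝ} (hc : 0 ≤ c)
    (hA : A.PosSemidef) : (c • A).PosSemidef := by
  refine Matrix.posSemidef_iff_dotProduct_mulVec.mpr ⟨?_, ?_⟩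
  · unfold Matrix.IsHermitian
    rw [Matrix.conjTranspose_smul, hA.1]
    simp
  · intro x
    have := hA.dotProduct_mulVec_nonneg x
    simp only [Matrix.smul_mulVec, dotProduct_smul, smul_eq_mul]
    exact mul_nonneg hc this

private lemma aux_comb_posdef {A B : Matrix (Fin d) (Fin d) ℝ} {p q : ℝ}
    (hA : A.PosDef) (hB : B.PosDef) (hp : 0 ≤ p) (hq : 0 ≤ q) (hpq : p + q = 1) :
    (p • A + q • B).PosDef := by
  rcases eq_or_lt_of_le hp with hp0 | hp0
  · have hq1 : q = 1 := by linarith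
    simpa [← hp0, hq1] using hB
  · exact (aux_smul_posdef hp0 hA).add_posSemidef (aux_smul_psd hq hB.posSemidef)

/-- Peierls' inequality: for any unitary conjugation, the sum of `g` of the diagonal
entries dominates the trace of `g` applied spectrally; strictly so if the conjugated
matrix has a nonzero off-diagonal entry. -/
private lemma aux_peierls {g : ℝ → ℝ} (hsconc : StrictConcaveOn ℝ (Ioi (0:ℝ)) g)
    (X U : Matrix (Fin d) (Fin d) ℝ) (hX : X.PosDef)
    (hU : U ∈ Matrix.unitaryGroup (Fin d) ℝ) :
    (cfc g X).trace ≤ ∑ i, g ((star U * X * U) i i) ∧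
      ((∃ i k, i ≠ k ∧ (star U * X * U) i k ≠ 0) →
        (cfc g X).trace < ∑ i, g ((star U * X * U) i i)) := by
  classical
  set V : Matrix (Fin d) (Fin d) ℝ := (hX.1.eigenvectorUnitary : Matrix (Fin d) (Fin d) ℝ)
    with hVdef
  set W : Matrix (Fin d) (Fin d) ℝ := star U * V with hWdef
  set μ : Fin d → ℝ := hX.1.eigenvalues with hμdef
  have hV : V ∈ Matrix.unitaryGroup (Fin d) ℝ := SetLike.coe_mem _
  have hWW : W * star W = 1 := by
    rw [hWdef, StarMul.star_mul, star_star]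
    calc star U * V * (star V * U) = star U * (V * star V) * U := by
          simp only [Matrix.mul_assoc]
      _ = star U * U := by rw [Matrix.mem_unitaryGroup_iff.mp hV, mul_one]
      _ = 1 := Matrix.mem_unitaryGroup_iff'.mp hU
  have hWsW : star W * W = 1 := by
    rw [hWdef, StarMul.star_mul, star_star]
    calc star V * U * (star U * V) = star V * (U * star U) * V := by
          simp only [Matrix.mul_assoc]
      _ = star V * V := by rw [Matrix.mem_unitaryGroup_iff.mp hU, mul_one]
      _ = 1 := Matrix.mem_unitaryGroup_iff'.mp hV
  have hX' : star U * X * U = W * Matrix.diagonal μ * star W := by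
    conv_lhs => rw [hX.1.spectral_theorem, Unitary.conjStarAlgAut_apply]
    rw [RCLike.ofReal_real_eq_id, Function.id_comp]
    rw [hWdef, StarMul.star_mul, star_star]
    simp only [Matrix.mul_assoc, ← hVdef, ← hμdef]
  have entry : ∀ i k, (star U * X * U) i k = ∑ j, W i j * W k j * μ j := by
    intro i k
    rw [hX', Matrix.mul_apply]
    refine Finset.sum_congr rfl fun j _ => ?_
    rw [Matrix.mul_diagonal, Matrix.star_apply, star_trivial]
    ring
  have hrow : ∀ i, ∑ j, W i j ^ 2 = 1 := by
    intro i
    have := congrArg (fun M : Matrix (Fin d) (Fin d) ℝ => M i i) hWW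
    simp only [Matrix.mul_apply, Matrix.star_apply, star_trivial, Matrix.one_apply_eq] at this
    rw [← this]
    exact Finset.sum_congr rfl fun j _ => (sq (W i j)).symm ▸ (pow_two (W i j)).symm ▸ by ring
  have hcol : ∀ j, ∑ i, W i j ^ 2 = 1 := by
    intro j
    have := congrArg (fun M : Matrix (Fin d) (Fin d) ℝ => M j j) hWsW
    simp only [Matrix.mul_apply, Matrix.star_apply, star_trivial, Matrix.one_apply_eq] at this
    rw [← this]
    exact Finset.sum_congr rfl fun i _ => by ring
  have hdiag : ∀ i, (star U * X * U) i i = ∑ j, W i j ^ 2 * μ j := by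
    intro i
    rw [entry i i]
    exact Finset.sum_congr rfl fun j _ => by ring
  have hμpos : ∀ j, μ j ∈ Ioi (0:ℝ) := fun j => hX.eigenvalues_pos j
  have htr : (cfc g X).trace = ∑ j, g (μ j) := aux_trace_cfc X hX.1 g
  have hle_row : ∀ i, ∑ j, W i j ^ 2 * g (μ j) ≤ g ((star U * X * U) i i) := by
    intro i
    rw [hdiag i]
    have := hsconc.concaveOn.le_map_sum (t := Finset.univ) (w := fun j => W i j ^ 2)
      (p := μ) (fun j _ => sq_nonneg _) (hrow i) (fun j _ => hμpos j)
    simpa [smul_eq_mul] using this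
  have hsum : ∑ j, g (μ j) = ∑ i, ∑ j, W i j ^ 2 * g (μ j) := by
    rw [Finset.sum_comm]
    refine Finset.sum_congr rfl fun j _ => ?_
    rw [← Finset.sum_mul, hcol j, one_mul]
  constructor
  · rw [htr, hsum]
    exact Finset.sum_le_sum fun i _ => hle_row i
  · rintro ⟨i₀, k₀, hik, hne⟩
    have hoff : ∑ j, W i₀ j * W k₀ j = 0 := by
      have := congrArg (fun M : Matrix (Fin d) (Fin d) ℝ => M i₀ k₀) hWW
      simp only [Matrix.mul_apply, Matrix.star_apply, star_trivial,
        Matrix.one_apply_ne hik] at this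
      exact this
    set t : Finset (Fin d) := Finset.univ.filter (fun j => W i₀ j ≠ 0) with htdef
    have hsub : ∀ (f : Fin d → ℝ), ∑ j ∈ t, W i₀ j ^ 2 * f j = ∑ j, W i₀ j ^ 2 * f j := by
      intro f
      refine Finset.sum_subset (Finset.subset_univ _) fun j _ hj => ?_
      have : W i₀ j = 0 := by simpa [htdef] using hj
      simp [this]
    have hw : ∀ j ∈ t, 0 < W i₀ j ^ 2 := fun j hj => by
      have : W i₀ j ≠ 0 := (Finset.mem_filter.mp hj).2
      positivity
    have hw1 : ∑ j ∈ t, W i₀ j ^ 2 = 1 := by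
      have := hsub (fun _ => 1)
      simpa [mul_one, hrow i₀] using this
    have hnonconst : ∃ j ∈ t, ∃ k ∈ t, μ j ≠ μ k := by
      by_contra hcon
      push_neg at hcon
      have h0 : ∑ j, W i₀ j * W k₀ j * μ j ≠ 0 := by rw [← entry i₀ k₀]; exact hne
      obtain ⟨j₁, hj₁⟩ : ∃ j, W i₀ j * W k₀ j * μ j ≠ 0 := by
        by_contra h
        push_neg at h
        exact h0 (Finset.sum_eq_zero fun j _ => h j)
      have hWj₁ : W i₀ j₁ ≠ 0 := fun h => hj₁ (by simp [h])
      have hj₁t : j₁ ∈ t := by simp [htdef, hWj₁]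
      have heq : ∑ j, W i₀ j * W k₀ j * μ j = μ j₁ * ∑ j, W i₀ j * W k₀ j := by
        rw [Finset.mul_sum]
        refine Finset.sum_congr rfl fun j _ => ?_
        by_cases hj : W i₀ j = 0
        · simp [hj]
        · rw [hcon j (by simp [htdef, hj]) j₁ hj₁t]; ring
      rw [heq, hoff, mul_zero] at h0
      exact h0 rfl
    have hstrict : ∑ j, W i₀ j ^ 2 * g (μ j) < g ((star U * X * U) i₀ i₀) := by
      have := hsconc.lt_map_sum (t := t) (w := fun j => W i₀ j ^ 2) (p := μ)
        hw hw1 (fun j _ => hμpos j) hnonconst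
      simp only [smul_eq_mul] at this
      calc ∑ j, W i₀ j ^ 2 * g (μ j) = ∑ j ∈ t, W i₀ j ^ 2 * g (μ j) := (hsub _).symm
        _ < g (∑ j ∈ t, W i₀ j ^ 2 * μ j) := this
        _ = g ((star U * X * U) i₀ i₀) := by rw [hsub, ← hdiag i₀]
    rw [htr, hsum]
    exact Finset.sum_lt_sum (fun i _ => hle_row i) ⟨i₀, Finset.mem_univ _, hstrict⟩

/-- `cfc g` is injective on positive definite matrices when `g` is injective on `(0,∞)`. -/
private lemma aux_cfc_injOn {g : ℝ → ℝ} (hinj : Set.InjOn g (Ioi (0:ℝ)))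
    {A B : Matrix (Fin d) (Fin d) ℝ} (hA : A.PosDef) (hB : B.PosDef)
    (h : cfc g A = cfc g B) : A = B := by
  set h' := Function.invFunOn g (Ioi 0) with hh'
  have hret : ∀ x ∈ Ioi (0:ℝ), h' (g x) = x := fun x hx => hinj.leftInvOn_invFunOn hx
  have key : ∀ (C : Matrix (Fin d) (Fin d) ℝ), C.PosDef → cfc (h' ∘ g) C = C := by
    intro C hC
    have hC' : IsSelfAdjoint C := hC.1
    have h1 : cfc (h' ∘ g) C = cfc (id : ℝ → ℝ) C := by
      apply cfc_congr
      intro x hx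
      have hx' : x ∈ Ioi (0:ℝ) := by
        rw [hC.1.spectrum_real_eq_range_eigenvalues] at hx
        obtain ⟨i, rfl⟩ := hx
        exact hC.eigenvalues_pos i
      exact hret x hx'
    rw [h1, cfc_id ℝ C hC']
  have hcomp : ∀ (C : Matrix (Fin d) (Fin d) ℝ), C.IsHermitian →
      cfc (h' ∘ g) C = cfc h' (cfc g C) := by
    intro C hC
    have hC' : IsSelfAdjoint C := hC
    exact cfc_comp h' g C hC'
      (((Matrix.finite_real_spectrum (A := C)).image g).continuousOn h')
      ((Matrix.finite_real_spectrum (A := C)).continuousOn g)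
  calc A = cfc (h' ∘ g) A := (key A hA).symm
    _ = cfc h' (cfc g A) := hcomp A hA.1
    _ = cfc h' (cfc g B) := by rw [h]
    _ = cfc (h' ∘ g) B := (hcomp B hB.1).symm
    _ = B := key B hB

end Aux

/-- If `g : (0,∞) → ℝ` is injective, strictly concave, and matrix monotone (applied
spectrally via the continuous functional calculus), then `ψ(X) := tr (g(X))` is strictly
concave and strictly isotonic on the symmetric positive definite cone. -/
theorem trace_spectral_strictConcave_strictIsotone (d : ℕ) (g : ℝ → ℝ)
    (hinj : Set.InjOn g (Ioi (0 : ℝ)))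
    (hsconc : StrictConcaveOn ℝ (Ioi (0 : ℝ)) g)
    (hmono : ∀ A B : Matrix (Fin d) (Fin d) ℝ, B.PosDef → (A - B).PosSemidef →
      (cfc g A - cfc g B).PosSemidef)
    (ψ : Matrix (Fin d) (Fin d) ℝ → ℝ) (hψ : ∀ X, ψ X = (cfc g X).trace) :
    (∀ A B : Matrix (Fin d) (Fin d) ℝ, A.PosDef → (B - A).PosSemidef → A ≠ B →
      ψ A < ψ B) ∧
    StrictConcaveOn ℝ {X : Matrix (Fin d) (Fin d) ℝ | X.PosDef} ψ := by
  constructor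
  · -- strict isotonicity
    intro A B hA hBA hAB
    have hB : B.PosDef := by
      have h1 := hA.add_posSemidef hBA
      have h2 : A + (B - A) = B := by abel
      rwa [h2] at h1
    have hM := hmono B A hA hBA
    have htr : 0 ≤ (cfc g B - cfc g A).trace := by
      rw [aux_trace_eq_sum_eigenvalues _ hM.1]
      exact Finset.sum_nonneg fun i _ => hM.eigenvalues_nonneg i
    rw [Matrix.trace_sub] at htr
    have hle : ψ A ≤ ψ B := by rw [hψ, hψ]; linarith
    rcases hle.lt_or_eq with h | h
    · exact h
    · exfalso
      have h0 : (cfc g B - cfc g A).trace = 0 := by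
        rw [Matrix.trace_sub]
        rw [hψ, hψ] at h
        linarith
      have hz := aux_psd_trace_zero _ hM h0
      have hEq : cfc g A = cfc g B := (sub_eq_zero.mp hz).symm
      exact hAB (aux_cfc_injOn hinj hA hB hEq)
  · constructor
    · intro x hx y hy p q hp hq hpq
      exact aux_comb_posdef hx hy hp hq hpq
    · intro x hx y hy hxy p q hp hq hpq
      simp only [Set.mem_setOf_eq] at hx hy
      set C := p • x + q • y with hC0
      have hC : C.PosDef := aux_comb_posdef hx hy hp.le hq.le hpq
      set U : Matrix (Fin d) (Fin d) ℝ :=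
        (hC.1.eigenvectorUnitary : Matrix (Fin d) (Fin d) ℝ) with hUdef
      have hU : U ∈ Matrix.unitaryGroup (Fin d) ℝ := SetLike.coe_mem _
      set lam := hC.1.eigenvalues with hlamdef
      have hdiagC : star U * C * U = Matrix.diagonal lam := by
        have := hC.1.conjStarAlgAut_star_eigenvectorUnitary
        simp only [Unitary.conjStarAlgAut_apply, Unitary.coe_star, star_star,
          RCLike.ofReal_real_eq_id, Function.id_comp] at this
        exact this
      set x' := star U * x * U with hx'def
      set y' := star U * y * U with hy'def
      have hsplit : star U * C * U = p • x' + q • y' := by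
        rw [hC0, hx'def, hy'def]
        simp only [mul_add, add_mul, mul_smul_comm, smul_mul_assoc]
      have hlam_eq : ∀ i, lam i = p * x' i i + q * y' i i := by
        intro i
        have := congrArg (fun M : Matrix (Fin d) (Fin d) ℝ => M i i) (hdiagC.symm.trans hsplit)
        simpa [Matrix.diagonal_apply_eq, Matrix.add_apply, Matrix.smul_apply,
          smul_eq_mul] using this
      have hx'pd : x'.PosDef := aux_conj_posdef hU hx
      have hy'pd : y'.PosDef := aux_conj_posdef hU hy
      have ha : ∀ i, x' i i ∈ Ioi (0:ℝ) := fun i => aux_diag_pos hx'pd i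
      have hb : ∀ i, y' i i ∈ Ioi (0:ℝ) := fun i => aux_diag_pos hy'pd i
      have hjen : ∀ i, p * g (x' i i) + q * g (y' i i) ≤ g (lam i) := by
        intro i
        rw [hlam_eq i]
        by_cases h : x' i i = y' i i
        · rw [h, ← add_mul, ← add_mul, hpq, one_mul, one_mul]
        · have := hsconc.2 (ha i) (hb i) h hp hq hpq
          simpa [smul_eq_mul] using this.le
      have hP1 := aux_peierls hsconc x U hx hU
      have hP2 := aux_peierls hsconc y U hy hU
      rw [← hx'def] at hP1
      rw [← hy'def] at hP2
      have htrC : ψ C = ∑ i, g (lam i) := by rw [hψ]; exact aux_trace_cfc C hC.1 g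
      have hsum_le : p * ∑ i, g (x' i i) + q * ∑ i, g (y' i i) ≤ ∑ i, g (lam i) := by
        rw [Finset.mul_sum, Finset.mul_sum, ← Finset.sum_add_distrib]
        exact Finset.sum_le_sum fun i _ => hjen i
      simp only [smul_eq_mul]
      by_cases hab : ∀ i, x' i i = y' i i
      · have hx'y' : x' ≠ y' := by
          intro h
          apply hxy
          have hUU : U * star U = 1 := Matrix.mem_unitaryGroup_iff.mp hU
          have hcan : ∀ z : Matrix (Fin d) (Fin d) ℝ, U * (star U * z * U) * star U = z := by
            intro z
            calc U * (star U * z * U) * star U = U * star U * z * (U * star U) := by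
                  simp only [Matrix.mul_assoc]
              _ = z := by rw [hUU]; simp
          have h2 : U * x' * star U = U * y' * star U := by rw [h]
          rw [hx'def, hy'def, hcan, hcan] at h2
          exact h2
        obtain ⟨i₁, k₁, hik0⟩ : ∃ i k, x' i k ≠ y' i k := by
          by_contra h
          push_neg at h
          exact hx'y' (Matrix.ext h)
        have hik : i₁ ≠ k₁ := fun h => hik0 (h ▸ hab i₁)
        have hone : x' i₁ k₁ ≠ 0 ∨ y' i₁ k₁ ≠ 0 := by
          by_contra h
          push_neg at h
          exact hik0 (h.1.trans h.2.symm)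
        have key : p * (cfc g x).trace + q * (cfc g y).trace
            < p * ∑ i, g (x' i i) + q * ∑ i, g (y' i i) := by
          rcases hone with h | h
          · have h1 := hP1.2 ⟨i₁, k₁, hik, h⟩
            have h2 := hP2.1
            nlinarith
          · have h1 := hP1.1
            have h2 := hP2.2 ⟨i₁, k₁, hik, h⟩
            nlinarith
        calc p * ψ x + q * ψ y = p * (cfc g x).trace + q * (cfc g y).trace := by
              rw [hψ, hψ]
          _ < p * ∑ i, g (x' i i) + q * ∑ i, g (y' i i) := key
          _ ≤ ∑ i, g (lam i) := hsum_le
          _ = ψ C := htrC.symm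
      · push_neg at hab
        obtain ⟨i₁, hi₁⟩ := hab
        have hstrict_i : p * g (x' i₁ i₁) + q * g (y' i₁ i₁) < g (lam i₁) := by
          rw [hlam_eq i₁]
          have := hsconc.2 (ha i₁) (hb i₁) hi₁ hp hq hpq
          simpa [smul_eq_mul] using this
        have hsum_lt : p * ∑ i, g (x' i i) + q * ∑ i, g (y' i i) < ∑ i, g (lam i) := by
          rw [Finset.mul_sum, Finset.mul_sum, ← Finset.sum_add_distrib]
          exact Finset.sum_lt_sum (fun j _ => hjen j) ⟨i₁, Finset.mem_univ _, hstrict_i⟩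
        calc p * ψ x + q * ψ y = p * (cfc g x).trace + q * (cfc g y).trace := by
              rw [hψ, hψ]
          _ ≤ p * ∑ i, g (x' i i) + q * ∑ i, g (y' i i) := by
              have h1 := hP1.1
              have h2 := hP2.1
              nlinarith
          _ < ∑ i, g (lam i) := hsum_lt
          _ = ψ C := htrC.symm
end

section
/- Let f(w) = −(1/w_1 + 1/w_2) on the open 2-simplex, f* = −4, and for λ ∈ (0,1) let w^+ := F_λ(w) where F_λ(w) = (w_1^{1−2λ}, w_2^{1−2λ})/(w_1^{1−2λ}+w_2^{1−2λ}). Then f* − f(w^+) ≤ |1 − 2λ| · (f* − f(w)). -/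
/-- The multiplicative-algorithm map for the 2-dimensional A-optimal design problem. -/
noncomputable def Fmap (l : ℝ) (w : ℝ × ℝ) : ℝ × ℝ :=
  (w.1 ^ (1 - 2 * l) / (w.1 ^ (1 - 2 * l) + w.2 ^ (1 - 2 * l)),
   w.2 ^ (1 - 2 * l) / (w.1 ^ (1 - 2 * l) + w.2 ^ (1 - 2 * l)))

/-- Concave Bernoulli: for `t > 0` and `0 ≤ γ ≤ 1`, `t^γ ≤ 1 + γ (t - 1)`. -/
lemma rpow_le_one_add_mul (t γ : ℝ) (ht : 0 < t) (hγ0 : 0 ≤ γ) (hγ1 : γ ≤ 1) :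
    t ^ γ ≤ 1 + γ * (t - 1) := by
  have h := rpow_one_add_le_one_add_mul_self (s := t - 1) (by linarith) hγ0 hγ1
  simpa using h

/-- Key inequality: `t^γ + t^{-γ} - 2 ≤ γ (t + 1/t - 2)` for `t > 0`, `γ ∈ [0,1]`. -/
lemma key_ineq (t γ : ℝ) (ht : 0 < t) (hγ0 : 0 ≤ γ) (hγ1 : γ ≤ 1) :
    t ^ γ + t ^ (-γ) - 2 ≤ γ * (t + 1 / t - 2) := by
  have h1 := rpow_le_one_add_mul t γ ht hγ0 hγ1
  have h2 := rpow_le_one_add_mul (1 / t) γ (by positivity) hγ0 hγ1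
  have hneg : t ^ (-γ) = (1 / t) ^ γ := by
    rw [Real.rpow_neg ht.le, one_div, Real.inv_rpow ht.le]
  rw [hneg]
  nlinarith [h1, h2]

/-- Global linear convergence of the multiplicative algorithm on the 2-dimensional
A-optimal design problem: `f* − f(w⁺) ≤ |1 − 2λ| (f* − f(w))` where `f* = -4`. -/
theorem Fmap_linear_convergence (l : ℝ) (hl0 : 0 < l) (hl1 : l < 1)
    (w : ℝ × ℝ) (h1 : 0 < w.1) (h2 : 0 < w.2) (hsum : w.1 + w.2 = 1) :
    (-4 : ℝ) - (-(1 / (Fmap l w).1 + 1 / (Fmap l w).2)) ≤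
      |1 - 2 * l| * ((-4 : ℝ) - (-(1 / w.1 + 1 / w.2))) := by
  set e : ℝ := 1 - 2 * l with he
  have ha : (0:ℝ) < w.1 ^ e := Real.rpow_pos_of_pos h1 e
  have hb : (0:ℝ) < w.2 ^ e := Real.rpow_pos_of_pos h2 e
  set a : ℝ := w.1 ^ e
  set b : ℝ := w.2 ^ e
  have hF1 : (Fmap l w).1 = a / (a + b) := rfl
  have hF2 : (Fmap l w).2 = b / (a + b) := rfl
  have hab : a + b ≠ 0 := by positivity
  -- LHS simplification
  have hL : (-4 : ℝ) - (-(1 / (Fmap l w).1 + 1 / (Fmap l w).2)) = a / b + b / a - 2 := by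
    rw [hF1, hF2]
    field_simp
    ring
  -- RHS bracket
  have hR : (-4 : ℝ) - (-(1 / w.1 + 1 / w.2)) = w.1 / w.2 + w.2 / w.1 - 2 := by
    field_simp
    linear_combination (-(w.1 + w.2)) * hsum
  rw [hL, hR]
  set t : ℝ := w.1 / w.2 with htdef
  have ht : 0 < t := by positivity
  have hat : a / b = t ^ e := by
    rw [htdef, Real.div_rpow h1.le h2.le]
  have hbt : b / a = t ^ (-e) := by
    rw [htdef, Real.rpow_neg ht.le, ← hat]
    field_simp
  have h1t : w.2 / w.1 = 1 / t := by
    rw [htdef]; field_simp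
  rw [hat, hbt, h1t]
  rcases le_or_gt 0 e with hcase | hcase
  · rw [abs_of_nonneg hcase]
    exact key_ineq t e ht hcase (by rw [he]; linarith)
  · rw [abs_of_neg hcase]
    have hk := key_ineq t (-e) ht (by linarith) (by rw [he]; linarith)
    rw [neg_neg] at hk
    linarith
end
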